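/- arXiv:2602.07558 — 5 statements merged into one kernel-verified Lean document; each statement's English description precedes it below -/
import Mathlib

section
/- The sum over all primes p > 2 of 2/((p-2)(p+1)) is less than 0.7272. -/
open Finset Filter Topology

set_option maxRecDepth 1000000
set_option maxHeartbeats 4000000

noncomputable def fP : ℕ → ℝ := fun p =>
  if p.Prime ∧ 2 < p then 2 / (((p : ℝ) - 2) * ((p : ℝ) + 1)) else 0

noncomputable def gM : ℕ → ℝ := fun n =>
  if n < 2520 then fP n
  else if Nat.Coprime n 210 then 2 / (((n : ℝ) - 105.5) * ((n : ℝ) + 104.5)) else 0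

noncomputable def sVal : ℕ → ℝ := fun r =>
  if Nat.Coprime r 210 then (1 / 105) * (1 / ((r : ℝ) + 2414.5)) else 0

lemma tele (c : ℝ) (hc : 1 ≤ c) :
    HasSum (fun k : ℕ => 1 / (210 * (k : ℝ) + c) - 1 / (210 * (k : ℝ) + 210 + c)) (1 / c) := by
  have hc0 : 0 < c := by linarith
  have hpos : ∀ k : ℕ, (0:ℝ) < 210 * (k : ℝ) + c := fun k => by positivity
  rw [hasSum_iff_tendsto_nat_of_nonneg]
  · have key : ∀ n : ℕ,
        ∑ i ∈ range n, (1 / (210 * (i : ℝ) + c) - 1 / (210 * (i : ℝ) + 210 + c))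
          = 1 / c - 1 / (210 * (n : ℝ) + c) := by
      intro n
      have h := Finset.sum_range_sub' (f := fun i : ℕ => 1 / (210 * (i : ℝ) + c)) n
      have h2 : ∑ i ∈ range n, (1 / (210 * (i : ℝ) + c) - 1 / (210 * (i : ℝ) + 210 + c))
          = ∑ i ∈ range n, ((fun i : ℕ => 1 / (210 * (i : ℝ) + c)) i
              - (fun i : ℕ => 1 / (210 * (i : ℝ) + c)) (i + 1)) := by
        refine Finset.sum_congr rfl fun i _ => ?_
        push_cast
        ring_nf
      rw [h2, h]
      norm_num
    have h1 : Tendsto (fun n : ℕ => 1 / (210 * (n : ℝ) + c)) atTop (𝓝 0) := by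
      apply squeeze_zero (fun n => le_of_lt (by positivity))
        (g := fun n : ℕ => 1 / ((n : ℝ) + 1))
      · intro n
        apply one_div_le_one_div_of_le (by positivity)
        have : (0:ℝ) ≤ (n : ℝ) := Nat.cast_nonneg n
        linarith
      · exact tendsto_one_div_add_atTop_nhds_zero_nat
    have h2 : Tendsto (fun n : ℕ => 1 / c - 1 / (210 * (n : ℝ) + c)) atTop (𝓝 (1 / c - 0)) :=
      tendsto_const_nhds.sub h1
    rw [sub_zero] at h2
    refine Tendsto.congr (fun n => (key n).symm) h2
  · intro i
    have h1 := hpos i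
    have h2 : (0:ℝ) < 210 * (i : ℝ) + 210 + c := by positivity
    have := one_div_le_one_div_of_le h1 (by linarith : 210 * (i : ℝ) + c ≤ 210 * (i : ℝ) + 210 + c)
    linarith

lemma classSum (r : ℕ) (hr : r < 210) :
    HasSum (fun n : ℕ => if n % 210 = r then gM (n + 2520) else 0) (sVal r) := by
  have hinj : Function.Injective (fun k : ℕ => 210 * k + r) := fun a b h => by
    simp only at h; omega
  have hvanish : ∀ n ∉ Set.range (fun k : ℕ => 210 * k + r),
      (if n % 210 = r then gM (n + 2520) else 0) = 0 := by
    intro n hn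
    have : n % 210 ≠ r := by
      intro h
      refine hn ⟨n / 210, ?_⟩
      show 210 * (n / 210) + r = n
      omega
    rw [if_neg this]
  have hmod : ∀ k : ℕ, (210 * k + r) % 210 = r := fun k => by omega
  refine (Function.Injective.hasSum_iff hinj hvanish).1 ?_
  by_cases hcop : Nat.Coprime r 210
  · have hco : ∀ k : ℕ, Nat.Coprime (210 * k + r + 2520) 210 := by
      intro k
      have e : 210 * k + r + 2520 = r + (k + 12) * 210 := by ring
      rw [e, Nat.coprime_add_mul_right_left]
      exact hcop
    have hfun : ((fun n : ℕ => if n % 210 = r then gM (n + 2520) else 0) ∘ fun k : ℕ => 210 * k + r)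
        = fun k : ℕ => (1 / 105) * (1 / (210 * (k : ℝ) + ((r : ℝ) + 2414.5))
            - 1 / (210 * (k : ℝ) + 210 + ((r : ℝ) + 2414.5))) := by
      funext k
      simp only [Function.comp_apply]
      rw [if_pos (hmod k)]
      show gM (210 * k + r + 2520) = _
      have hge : ¬ (210 * k + r + 2520 < 2520) := by omega
      simp only [gM]
      rw [if_neg hge, if_pos (hco k)]
      have hX : ((210 * k + r + 2520 : ℕ) : ℝ) = 210 * (k : ℝ) + (r : ℝ) + 2520 := by
        push_cast; ring
      rw [hX]
      have h1 : (0:ℝ) < 210 * (k : ℝ) + ((r : ℝ) + 2414.5) := by positivity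
      have h2 : (0:ℝ) < 210 * (k : ℝ) + 210 + ((r : ℝ) + 2414.5) := by positivity
      have e1 : 210 * (k : ℝ) + (r : ℝ) + 2520 - 105.5 = 210 * (k : ℝ) + ((r : ℝ) + 2414.5) := by
        ring
      have e2 : 210 * (k : ℝ) + (r : ℝ) + 2520 + 104.5 = 210 * (k : ℝ) + 210 + ((r : ℝ) + 2414.5) := by
        ring
      rw [e1, e2]
      field_simp
      ring
    rw [hfun]
    have hc1 : (1:ℝ) ≤ (r : ℝ) + 2414.5 := by
      have : (0:ℝ) ≤ (r : ℝ) := Nat.cast_nonneg r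
      linarith
    have h := (tele ((r : ℝ) + 2414.5) hc1).mul_left (1 / 105)
    have hs : sVal r = (1 / 105) * (1 / ((r : ℝ) + 2414.5)) := by
      simp only [sVal, if_pos hcop]
    rw [hs]
    exact h
  · have hnco : ∀ k : ℕ, ¬ Nat.Coprime (210 * k + r + 2520) 210 := by
      intro k h
      have e : 210 * k + r + 2520 = r + (k + 12) * 210 := by ring
      rw [e, Nat.coprime_add_mul_right_left] at h
      exact hcop h
    have hfun : ((fun n : ℕ => if n % 210 = r then gM (n + 2520) else 0) ∘ fun k : ℕ => 210 * k + r)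
        = fun _ : ℕ => (0:ℝ) := by
      funext k
      simp only [Function.comp_apply]
      rw [if_pos (hmod k)]
      show gM (210 * k + r + 2520) = 0
      have hge : ¬ (210 * k + r + 2520 < 2520) := by omega
      simp only [gM]
      rw [if_neg hge, if_neg (hnco k)]
    rw [hfun]
    have hs : sVal r = 0 := by simp only [sVal, if_neg hcop]
    rw [hs]
    exact hasSum_zero

lemma tailSum : HasSum (fun n : ℕ => gM (n + 2520)) (∑ r ∈ range 210, sVal r) := by
  have h := hasSum_sum (s := range 210)
    (f := fun r (n : ℕ) => if n % 210 = r then gM (n + 2520) else 0) (a := sVal)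
    (fun r hr => classSum r (mem_range.1 hr))
  have hfun : (fun n : ℕ => ∑ r ∈ range 210, if n % 210 = r then gM (n + 2520) else 0)
      = fun n : ℕ => gM (n + 2520) := by
    funext n
    rw [Finset.sum_ite_eq]
    exact if_pos (mem_range.2 (Nat.mod_lt _ (by norm_num)))
  rwa [hfun] at h

lemma hS : ∑ r ∈ range 210, sVal r < 0.0001816 := by
  norm_num [sVal, Finset.sum_range_succ, Nat.Coprime]

theorem stmt1 :
    (∑' p : ℕ, if p.Prime ∧ 2 < p then 2 / (((p : ℝ) - 2) * ((p : ℝ) + 1)) else 0)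
      < 0.7272 := by
  show (∑' p : ℕ, fP p) < 0.7272
  have hf0 : ∀ n, 0 ≤ fP n := by
    intro n
    unfold fP
    split
    · next h =>
      have h3 : (3 : ℝ) ≤ (n : ℝ) := by exact_mod_cast h.2
      have : (0:ℝ) ≤ ((n : ℝ) - 2) * ((n : ℝ) + 1) := by nlinarith
      positivity
    · exact le_refl _
  have hfg : ∀ n, fP n ≤ gM n := by
    intro n
    unfold gM
    split
    · exact le_refl _
    · next hlt =>
      have h2520 : 2520 ≤ n := by omega
      have hn : (2520:ℝ) ≤ (n : ℝ) := by exact_mod_cast h2520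
      have hb : (0:ℝ) < ((n : ℝ) - 105.5) * ((n : ℝ) + 104.5) := by nlinarith
      by_cases hp : n.Prime ∧ 2 < n
      · have hcop : Nat.Coprime n 210 := by
          rw [Nat.Prime.coprime_iff_not_dvd hp.1]
          intro hd
          have := Nat.le_of_dvd (by norm_num) hd
          omega
        rw [if_pos hcop]
        have hf : fP n = 2 / (((n : ℝ) - 2) * ((n : ℝ) + 1)) := by
          simp only [fP, if_pos hp]
        rw [hf]
        have hab : ((n : ℝ) - 105.5) * ((n : ℝ) + 104.5) ≤ ((n : ℝ) - 2) * ((n : ℝ) + 1) := by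
          nlinarith
        gcongr
      · have hf : fP n = 0 := by simp only [fP, if_neg hp]
        rw [hf]
        split
        · positivity
        · exact le_refl _
  have htail := tailSum
  have hgsum : Summable gM := (summable_nat_add_iff 2520).1 htail.summable
  have hfsum : Summable fP := Summable.of_nonneg_of_le hf0 hfg hgsum
  have h1 : (∑' p, fP p) ≤ ∑' p, gM p := Summable.tsum_le_tsum hfg hfsum hgsum
  have h2 : ∑ i ∈ range 2520, gM i + ∑' i, gM (i + 2520) = ∑' i, gM i :=
    Summable.sum_add_tsum_nat_add 2520 hgsum
  have h3 : ∑ i ∈ range 2520, gM i = ∑ i ∈ range 2520, fP i :=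
    Finset.sum_congr rfl fun i hi => by simp only [gM]; rw [if_pos (mem_range.1 hi)]
  have h4 : ∑' i : ℕ, gM (i + 2520) = ∑ r ∈ range 210, sVal r := htail.tsum_eq
  -- finite sum, in chunks of 315
  have e7 : ∑ i ∈ range 2520, fP i
      = ∑ i ∈ range 2205, fP i + ∑ i ∈ range 315, fP (2205 + i) := Finset.sum_range_add fP 2205 315
  have e6 : ∑ i ∈ range 2205, fP i
      = ∑ i ∈ range 1890, fP i + ∑ i ∈ range 315, fP (1890 + i) := Finset.sum_range_add fP 1890 315
  have e5 : ∑ i ∈ range 1890, fP i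
      = ∑ i ∈ range 1575, fP i + ∑ i ∈ range 315, fP (1575 + i) := Finset.sum_range_add fP 1575 315
  have e4 : ∑ i ∈ range 1575, fP i
      = ∑ i ∈ range 1260, fP i + ∑ i ∈ range 315, fP (1260 + i) := Finset.sum_range_add fP 1260 315
  have e3 : ∑ i ∈ range 1260, fP i
      = ∑ i ∈ range 945, fP i + ∑ i ∈ range 315, fP (945 + i) := Finset.sum_range_add fP 945 315
  have e2 : ∑ i ∈ range 945, fP i
      = ∑ i ∈ range 630, fP i + ∑ i ∈ range 315, fP (630 + i) := Finset.sum_range_add fP 630 315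
  have e1 : ∑ i ∈ range 630, fP i
      = ∑ i ∈ range 315, fP i + ∑ i ∈ range 315, fP (315 + i) := Finset.sum_range_add fP 315 315
  have c0 : ∑ i ∈ range 315, fP i < 0.7261777 := by
    norm_num [fP, Finset.sum_range_succ]
  have c1 : ∑ i ∈ range 315, fP (315 + i) < 0.0004930 := by
    norm_num [fP, Finset.sum_range_succ]
  have c2 : ∑ i ∈ range 315, fP (630 + i) < 0.0001571 := by
    norm_num [fP, Finset.sum_range_succ]
  have c3 : ∑ i ∈ range 315, fP (945 + i) < 0.0000762 := by
    norm_num [fP, Finset.sum_range_succ]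
  have c4 : ∑ i ∈ range 315, fP (1260 + i) < 0.0000432 := by
    norm_num [fP, Finset.sum_range_succ]
  have c5 : ∑ i ∈ range 315, fP (1575 + i) < 0.0000284 := by
    norm_num [fP, Finset.sum_range_succ]
  have c6 : ∑ i ∈ range 315, fP (1890 + i) < 0.0000183 := by
    norm_num [fP, Finset.sum_range_succ]
  have c7 : ∑ i ∈ range 315, fP (2205 + i) < 0.0000146 := by
    norm_num [fP, Finset.sum_range_succ]
  have hA : ∑ i ∈ range 2520, fP i < 0.7270085 := by
    rw [e7, e6, e5, e4, e3, e2, e1]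
    linarith
  have hSbound := hS
  calc (∑' p, fP p) ≤ ∑' p, gM p := h1
    _ = ∑ i ∈ range 2520, fP i + ∑ r ∈ range 210, sVal r := by rw [← h2, h3, h4]
    _ < 0.7270085 + 0.0001816 := by linarith
    _ < 0.7272 := by norm_num
end

section
/- The sum over all odd squarefree positive integers d of 1/(2d²) is less than 0.608. -/
open Filter Finset

noncomputable def Fsq : ℕ → ℝ := fun d => if Squarefree d ∧ Odd d then 1 / (2 * (d : ℝ) ^ 2) else 0

lemma Fsq_nonneg (d : ℕ) : 0 ≤ Fsq d := by
  unfold Fsq; split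
  · positivity
  · exact le_rfl

lemma Fsq_le (d : ℕ) : Fsq d ≤ 1 / (2 * (d : ℝ) ^ 2) := by
  unfold Fsq; split
  · exact le_rfl
  · positivity

lemma Fsq_summable : Summable Fsq := by
  apply Summable.of_nonneg_of_le Fsq_nonneg Fsq_le
  have h : Summable (fun d : ℕ => 1 / (d : ℝ) ^ 2) :=
    Real.summable_one_div_nat_pow.mpr one_lt_two
  have := h.div_const 2
  convert this using 2 with d
  · rfl
  ring

lemma telescope (b : ℕ → ℝ) (hb : ∀ k, b (k + 1) ≤ b k)
    (h0 : Tendsto b atTop (nhds 0)) : HasSum (fun k => b k - b (k + 1)) (b 0) := by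
  rw [hasSum_iff_tendsto_nat_of_nonneg (fun i => sub_nonneg.2 (hb i))]
  have h : (fun n => ∑ i ∈ range n, (b i - b (i + 1))) = fun n => b 0 - b n := by
    funext n; exact Finset.sum_range_sub' b n
  rw [h]
  simpa using tendsto_const_nhds.sub h0

lemma tailzero (a : ℕ) (h : a % 2 = 0 ∨ a % 9 = 0) : ∑' q : ℕ, Fsq (q * 18 + a) = 0 := by
  have hz : ∀ q : ℕ, Fsq (q * 18 + a) = 0 := by
    intro q
    unfold Fsq
    rw [if_neg]
    rintro ⟨hsf, hodd⟩
    rcases h with h2 | h9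
    · have : (q * 18 + a) % 2 = 1 := Nat.odd_iff.mp hodd
      omega
    · have h9' : 9 ∣ q * 18 + a := by omega
      have : (3 : ℕ) * 3 ∣ q * 18 + a := by omega
      exact (by norm_num : ¬ IsUnit (3 : ℕ)) (hsf 3 this)
  rw [tsum_congr hz, tsum_zero]

lemma key_ineq (x : ℝ) (hx : 10 ≤ x) :
    1 / (2 * x ^ 2) ≤ 1 / (36 * (x - 9)) - 1 / (36 * (x + 9)) := by
  have h1 : (0:ℝ) < x - 9 := by linarith
  have h2 : (0:ℝ) < x + 9 := by linarith
  have e : 1 / (36 * (x - 9)) - 1 / (36 * (x + 9)) = 1 / (2 * (x ^ 2 - 81)) := by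
    rw [div_sub_div _ _ (ne_of_gt (by nlinarith : (0:ℝ) < 36 * (x - 9)))
        (ne_of_gt (by nlinarith : (0:ℝ) < 36 * (x + 9))),
      div_eq_div_iff (by nlinarith) (by nlinarith)]
    ring
  rw [e]
  apply one_div_le_one_div_of_le (by nlinarith) (by nlinarith)

lemma tailpos (a : ℕ) (ha : 10 ≤ a) :
    ∑' q : ℕ, Fsq (q * 18 + a) ≤ 1 / (36 * ((a : ℝ) - 9)) := by
  have hA : (10 : ℝ) ≤ (a : ℝ) := by exact_mod_cast ha
  set b : ℕ → ℝ := fun q => 1 / (36 * ((a : ℝ) - 9 + 18 * q)) with hbdef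
  have hb : ∀ k, b (k + 1) ≤ b k := by
    intro k
    apply one_div_le_one_div_of_le
    · have : (0:ℝ) ≤ (k:ℝ) := Nat.cast_nonneg k
      nlinarith
    · push_cast
      have : (0:ℝ) ≤ (k:ℝ) := Nat.cast_nonneg k
      nlinarith
  have h0 : Tendsto b atTop (nhds 0) := by
    have h1 : Tendsto (fun q : ℕ => (q : ℝ)) atTop atTop := tendsto_natCast_atTop_atTop
    have h2 : Tendsto (fun q : ℕ => 18 * (q : ℝ)) atTop atTop :=
      h1.const_mul_atTop (by norm_num)
    have h3 : Tendsto (fun q : ℕ => (a : ℝ) - 9 + 18 * (q : ℝ)) atTop atTop :=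
      tendsto_atTop_add_const_left _ _ h2
    have h4 : Tendsto (fun q : ℕ => 36 * ((a : ℝ) - 9 + 18 * (q : ℝ))) atTop atTop :=
      h3.const_mul_atTop (by norm_num)
    have h5 : b = (fun q : ℕ => 36 * ((a : ℝ) - 9 + 18 * (q : ℝ)))⁻¹ := by
      funext q; simp [hbdef, one_div]
    rw [h5]; exact h4.inv_tendsto_atTop
  have hts := telescope b hb h0
  have hpt : ∀ q : ℕ, Fsq (q * 18 + a) ≤ b q - b (q + 1) := by
    intro q
    have hx : ((q * 18 + a : ℕ) : ℝ) = (a : ℝ) + 18 * q := by push_cast; ring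
    have hq : (0:ℝ) ≤ (q:ℝ) := Nat.cast_nonneg q
    refine le_trans (Fsq_le _) ?_
    have hkey := key_ineq ((a : ℝ) + 18 * q) (by linarith)
    have e1 : b q = 1 / (36 * (((a : ℝ) + 18 * q) - 9)) := by
      simp only [hbdef]; ring_nf
    have e2 : b (q + 1) = 1 / (36 * (((a : ℝ) + 18 * q) + 9)) := by
      simp only [hbdef]; push_cast; ring_nf
    rw [hx, e1, e2]
    exact hkey
  have hsumL : Summable (fun q : ℕ => Fsq (q * 18 + a)) :=
    Fsq_summable.comp_injective (fun x y h => by omega)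
  calc ∑' q : ℕ, Fsq (q * 18 + a) ≤ ∑' q : ℕ, (b q - b (q + 1)) :=
        Summable.tsum_le_tsum hpt hsumL hts.summable
    _ = b 0 := hts.tsum_eq
    _ = 1 / (36 * ((a : ℝ) - 9)) := by simp [hbdef]

set_option maxRecDepth 10000 in
theorem stmt3 :
    (∑' d : ℕ, if Squarefree d ∧ Odd d then 1 / (2 * (d : ℝ) ^ 2) else 0) < 0.608 := by
  show (∑' d : ℕ, Fsq d) < 0.608
  rw [← Summable.sum_add_tsum_nat_add 360 Fsq_summable]
  -- tail estimate
  have htail0 : Summable (fun i : ℕ => Fsq (i + 360)) :=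
    (summable_nat_add_iff 360).mpr Fsq_summable
  have hP : Summable (fun p : ℕ × Fin 18 => Fsq ((p.1 * 18 + (p.2 : ℕ)) + 360)) := by
    have := ((Nat.divModEquiv 18).symm.summable_iff
      (f := fun i : ℕ => Fsq (i + 360))).mpr htail0
    exact this
  have e := (Nat.divModEquiv 18).symm.tsum_eq (f := fun i : ℕ => Fsq (i + 360))
  have htail : (∑' i : ℕ, Fsq (i + 360)) ≤
      ∑ j ∈ range 18, (if (j + 360) % 2 = 1 ∧ ¬ (j + 360) % 9 = 0
        then 1 / (36 * ((j : ℝ) + 360 - 9)) else 0) := by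
    rw [← e]
    simp only [Nat.divModEquiv_symm_apply]
    rw [Summable.tsum_prod' hP (fun b => Summable.of_finite)]
    have hfin : ∀ a : ℕ, (∑' b : Fin 18, Fsq ((a * 18 + (b : ℕ)) + 360)) =
        ∑ b : Fin 18, Fsq ((a * 18 + (b : ℕ)) + 360) := fun a => tsum_fintype _
    rw [tsum_congr hfin]
    have hsums : ∀ r : Fin 18, Summable (fun a : ℕ => Fsq (a * 18 + (r : ℕ) + 360)) := by
      intro r
      exact Fsq_summable.comp_injective (i := fun a => a * 18 + (r : ℕ) + 360)
        (fun x y h => by simp only at h; omega)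
    rw [Summable.tsum_finsetSum (fun r _ => hsums r)]
    rw [← Fin.sum_univ_eq_sum_range (fun j => if (j + 360) % 2 = 1 ∧ ¬ (j + 360) % 9 = 0
        then 1 / (36 * ((j : ℝ) + 360 - 9)) else 0) 18]
    apply Finset.sum_le_sum
    intro i _
    by_cases hcond : ((i : ℕ) + 360) % 2 = 1 ∧ ¬ ((i : ℕ) + 360) % 9 = 0
    · rw [if_pos hcond]
      have := tailpos ((i : ℕ) + 360) (by omega)
      have he : ∀ q : ℕ, (q * 18 + ((i : ℕ) + 360)) = ((q * 18 + (i : ℕ)) + 360) := by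
        intro q; omega
      rw [tsum_congr (fun q => by rw [he q])] at this
      refine le_trans this ?_
      apply le_of_eq
      congr 1
      push_cast
      ring
    · rw [if_neg hcond]
      have hz : ((i : ℕ) + 360) % 2 = 0 ∨ ((i : ℕ) + 360) % 9 = 0 := by omega
      have := tailzero ((i : ℕ) + 360) hz
      have he : ∀ q : ℕ, (q * 18 + ((i : ℕ) + 360)) = ((q * 18 + (i : ℕ)) + 360) := by
        intro q; omega
      rw [tsum_congr (fun q => by rw [he q])] at this
      exact le_of_eq this
  -- partial sum estimate
  have hpart : (∑ i ∈ range 360, Fsq i) ≤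
      ∑ i ∈ range 360, (if i % 2 = 1 ∧ ¬ i % 9 = 0 ∧ ¬ i % 25 = 0 ∧ ¬ i % 49 = 0
          ∧ ¬ i % 121 = 0 ∧ ¬ i % 169 = 0 then 1 / (2 * (i : ℝ) ^ 2) else 0) := by
    apply Finset.sum_le_sum
    intro d _
    unfold Fsq
    by_cases hc : Squarefree d ∧ Odd d
    · rw [if_pos hc, if_pos]
      obtain ⟨hsf, hodd⟩ := hc
      have h2 : d % 2 = 1 := Nat.odd_iff.mp hodd
      have hnd : ∀ p : ℕ, ¬ IsUnit p → p * p ∣ d → False := fun p hp hd => hp (hsf p hd)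
      refine ⟨h2, fun h => hnd 3 (by simp [Nat.isUnit_iff]) (by omega),
        fun h => hnd 5 (by simp [Nat.isUnit_iff]) (by omega),
        fun h => hnd 7 (by simp [Nat.isUnit_iff]) (by omega),
        fun h => hnd 11 (by simp [Nat.isUnit_iff]) (by omega),
        fun h => hnd 13 (by simp [Nat.isUnit_iff]) (by omega)⟩
    · rw [if_neg hc]
      split
      · positivity
      · exact le_rfl
  have hfinal : (∑ i ∈ range 360, (if i % 2 = 1 ∧ ¬ i % 9 = 0 ∧ ¬ i % 25 = 0 ∧ ¬ i % 49 = 0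
          ∧ ¬ i % 121 = 0 ∧ ¬ i % 169 = 0 then 1 / (2 * (i : ℝ) ^ 2) else 0))
      + (∑ j ∈ range 18, (if (j + 360) % 2 = 1 ∧ ¬ (j + 360) % 9 = 0
        then 1 / (36 * ((j : ℝ) + 360 - 9)) else 0)) < 0.608 := by
    simp only [Finset.sum_range_succ, Finset.sum_range_zero]
    norm_num
  linarith [htail, hpart, hfinal]
end

section
/- For every real r ≥ 2, the sum over even integers h with 2 ≤ h ≤ r of the product over odd primes p dividing h of (p-1)/(p-2) is less than 1.2583·r. -/
open Finset

lemma telesc (N : ℕ) (hN : 2 ≤ N) :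
    ∏ n ∈ Finset.Icc 3 N, (1 + 1/((n:ℝ)*((n:ℝ)-2))) = 2*((N:ℝ)-1)/(N:ℝ) := by
  induction N, hN using Nat.le_induction with
  | base => norm_num
  | succ n hn ih =>
    rw [Finset.prod_Icc_succ_top (by omega), ih]
    have hn2 : (2:ℝ) ≤ n := by exact_mod_cast hn
    have h1 : (n:ℝ) ≠ 0 := by positivity
    have h2 : (n:ℝ) + 1 ≠ 0 := by positivity
    have h3 : (n:ℝ) - 1 ≠ 0 := by nlinarith
    push_cast
    have e : ((n:ℝ)+1) - 2 = (n:ℝ) - 1 := by ring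
    rw [e]
    field_simp
    ring

lemma count_lem (m N : ℕ) (hm : Odd m) :
    ((Finset.Icc 2 N).filter (fun h => Even h ∧ m ∣ h)).card = N / (2*m) := by
  rw [← Nat.Ioc_filter_dvd_card_eq_div N (2*m)]
  congr 1
  ext h
  simp only [mem_filter, mem_Icc, mem_Ioc]
  constructor
  · rintro ⟨⟨h2, hN⟩, he, hd⟩
    refine ⟨⟨by omega, hN⟩, ?_⟩
    have hcop : Nat.Coprime 2 m := (Nat.coprime_two_left).mpr hm
    exact hcop.mul_dvd_of_dvd_of_dvd he.two_dvd hd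
  · rintro ⟨⟨h0, hN⟩, hd⟩
    have h2 : 2 ∣ h := dvd_trans ⟨m, rfl⟩ hd
    have hmd : m ∣ h := dvd_trans ⟨2, by ring⟩ hd
    exact ⟨⟨by omega, hN⟩, (even_iff_two_dvd).mpr h2, hmd⟩

theorem stmt4 (r : ℝ) (hr : 2 ≤ r) :
    (∑ h ∈ (Finset.Icc 2 ⌊r⌋₊).filter (fun h => Even h),
        ∏ p ∈ h.primeFactors.filter (fun p => 2 < p), ((p : ℝ) - 1) / ((p : ℝ) - 2))
      < 1.2583 * r := by
  set N := ⌊r⌋₊ with hNdef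
  have hN2 : 2 ≤ N := Nat.le_floor (by exact_mod_cast hr)
  have hNr : (N:ℝ) ≤ r := Nat.floor_le (by linarith)
  set P : Finset ℕ := (Finset.Icc 3 N).filter Nat.Prime with hPdef
  -- Step A: rewrite each term as a sum over subsets of P
  have hA : ∀ h ∈ (Finset.Icc 2 N).filter (fun h => Even h),
      (∏ p ∈ h.primeFactors.filter (fun p => 2 < p), ((p : ℝ) - 1) / ((p : ℝ) - 2))
      = ∑ T ∈ P.powerset,
          (if (∏ p ∈ T, p) ∣ h then (∏ p ∈ T, 1/((p:ℝ)-2)) else 0) := by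
    intro h hh
    simp only [mem_filter, mem_Icc] at hh
    obtain ⟨⟨h2, hN⟩, -⟩ := hh
    have hh0 : h ≠ 0 := by omega
    set Q := h.primeFactors.filter (fun p => 2 < p) with hQdef
    have hQmem : ∀ p ∈ Q, p.Prime ∧ p ∣ h ∧ 2 < p := by
      intro p hp
      simp only [hQdef, mem_filter, Nat.mem_primeFactors] at hp
      exact ⟨hp.1.1, hp.1.2.1, hp.2⟩
    have hQP : Q ⊆ P := by
      intro p hp
      obtain ⟨hpp, hpd, hp2⟩ := hQmem p hp
      simp only [hPdef, mem_filter, mem_Icc]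
      exact ⟨⟨by omega, le_trans (Nat.le_of_dvd (by omega) hpd) hN⟩, hpp⟩
    have hfilter : P.powerset.filter (fun T => (∏ p ∈ T, p) ∣ h) = Q.powerset := by
      ext T
      simp only [mem_filter, mem_powerset]
      constructor
      · rintro ⟨hTP, hTd⟩ p hpT
        have hpP := hTP hpT
        simp only [hPdef, mem_filter, mem_Icc] at hpP
        have hpd : p ∣ h := dvd_trans (Finset.dvd_prod_of_mem _ hpT) hTd
        simp only [hQdef, mem_filter, Nat.mem_primeFactors]
        exact ⟨⟨hpP.2, hpd, hh0⟩, by omega⟩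
      · intro hTQ
        refine ⟨hTQ.trans hQP, Finset.prod_primes_dvd h ?_ ?_⟩
        · intro p hp; exact (hQmem p (hTQ hp)).1.prime
        · intro p hp; exact (hQmem p (hTQ hp)).2.1
    rw [← Finset.sum_filter, hfilter]
    have hcg : ∀ p ∈ Q, ((p : ℝ) - 1) / ((p : ℝ) - 2) = 1/((p:ℝ)-2) + 1 := by
      intro p hp
      have h2p : 2 < p := (hQmem p hp).2.2
      have h3p : (3:ℝ) ≤ (p:ℝ) := by exact_mod_cast h2p
      have : ((p:ℝ) - 2) ≠ 0 := by nlinarith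
      field_simp
      ring
    rw [Finset.prod_congr rfl hcg, Finset.prod_add]
    exact Finset.sum_congr rfl (fun T hT => by simp)
  rw [Finset.sum_congr rfl hA, Finset.sum_comm]
  -- Step B/C: evaluate and bound inner sums
  have hB : ∀ T ∈ P.powerset,
      (∑ h ∈ (Finset.Icc 2 N).filter (fun h => Even h),
        if (∏ p ∈ T, p) ∣ h then (∏ p ∈ T, 1/((p:ℝ)-2)) else 0)
      ≤ (N:ℝ)/2 * ∏ p ∈ T, 1/((p:ℝ)*((p:ℝ)-2)) := by
    intro T hT
    rw [mem_powerset] at hT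
    have hTfacts : ∀ p ∈ T, p.Prime ∧ 3 ≤ p := by
      intro p hp
      have := hT hp
      simp only [hPdef, mem_filter, mem_Icc] at this
      exact ⟨this.2, this.1.1⟩
    set m := ∏ p ∈ T, p with hmdef
    have hmodd : Odd m := by
      apply Finset.prod_induction _ Odd (fun a b ha hb => ha.mul hb) odd_one
      intro p hp
      obtain ⟨hpp, hp3⟩ := hTfacts p hp
      exact hpp.odd_of_ne_two (by omega)
    have hm1 : 1 ≤ m := Finset.one_le_prod' (fun p hp => (hTfacts p hp).1.one_lt.le)
    rw [← Finset.sum_filter, Finset.sum_const, Finset.filter_filter,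
      count_lem m N hmodd, nsmul_eq_mul]
    have hw0 : (0:ℝ) ≤ ∏ p ∈ T, 1/((p:ℝ)-2) := by
      apply Finset.prod_nonneg
      intro p hp
      have h3p : (3:ℝ) ≤ (p:ℝ) := by exact_mod_cast (hTfacts p hp).2
      have h0p : (0:ℝ) < (p:ℝ) - 2 := by linarith
      positivity
    have hcast : ((N / (2*m) : ℕ) : ℝ) ≤ (N:ℝ) / (2*(m:ℝ)) := by
      have := Nat.cast_div_le (α := ℝ) (m := N) (n := 2*m)
      push_cast at this ⊢
      exact this
    have hmpos : (0:ℝ) < (m:ℝ) := by exact_mod_cast hm1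
    have hm' : (m:ℝ) = ∏ p ∈ T, (p:ℝ) := by rw [hmdef]; push_cast; rfl
    calc ((N / (2*m) : ℕ) : ℝ) * ∏ p ∈ T, 1/((p:ℝ)-2)
        ≤ (N:ℝ) / (2*(m:ℝ)) * ∏ p ∈ T, 1/((p:ℝ)-2) :=
          mul_le_mul_of_nonneg_right hcast hw0
      _ = (N:ℝ)/2 * ∏ p ∈ T, 1/((p:ℝ)*((p:ℝ)-2)) := by
          have e1 : ∏ p ∈ T, 1/((p:ℝ)*((p:ℝ)-2))
              = (∏ p ∈ T, 1/(p:ℝ)) * ∏ p ∈ T, 1/((p:ℝ)-2) := by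
            rw [← Finset.prod_mul_distrib]
            exact Finset.prod_congr rfl fun p _ => by rw [one_div_mul_one_div]
          have e2 : ∏ p ∈ T, 1/(p:ℝ) = 1/(m:ℝ) := by
            simp only [one_div, Finset.prod_inv_distrib, hm']
          rw [e1, e2]
          have hm0 : (m:ℝ) ≠ 0 := ne_of_gt hmpos
          field_simp
  -- Step E: bound the outer sum
  have hPsub : P ⊆ Finset.Icc 3 N := Finset.filter_subset _ _
  have hfac : ∀ n ∈ Finset.Icc 3 N, (1:ℝ) ≤ 1 + 1/((n:ℝ)*((n:ℝ)-2)) := by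
    intro n hn
    rw [mem_Icc] at hn
    have h3 : (3:ℝ) ≤ (n:ℝ) := by exact_mod_cast hn.1
    have : (0:ℝ) < (n:ℝ)*((n:ℝ)-2) := by nlinarith
    have : (0:ℝ) ≤ 1/((n:ℝ)*((n:ℝ)-2)) := by positivity
    linarith
  have hE : ∑ T ∈ P.powerset, ((N:ℝ)/2 * ∏ p ∈ T, 1/((p:ℝ)*((p:ℝ)-2))) ≤ (N:ℝ) := by
    rw [← Finset.mul_sum]
    have hsum : ∑ T ∈ P.powerset, ∏ p ∈ T, 1/((p:ℝ)*((p:ℝ)-2))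
        = ∏ p ∈ P, (1/((p:ℝ)*((p:ℝ)-2)) + 1) := by
      rw [Finset.prod_add]
      exact (Finset.sum_congr rfl fun T hT => by simp).symm
    rw [hsum]
    have hPprod : ∏ p ∈ P, (1/((p:ℝ)*((p:ℝ)-2)) + 1)
        ≤ ∏ n ∈ Finset.Icc 3 N, (1 + 1/((n:ℝ)*((n:ℝ)-2))) := by
      have hre : ∏ p ∈ P, (1/((p:ℝ)*((p:ℝ)-2)) + 1)
          = ∏ p ∈ P, (1 + 1/((p:ℝ)*((p:ℝ)-2))) :=
        Finset.prod_congr rfl fun p _ => by ring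
      rw [hre, ← Finset.prod_sdiff hPsub]
      have hP0 : (0:ℝ) ≤ ∏ p ∈ P, (1 + 1/((p:ℝ)*((p:ℝ)-2))) :=
        Finset.prod_nonneg fun p hp => by linarith [hfac p (hPsub hp)]
      have hD1 : (1:ℝ) ≤ ∏ n ∈ (Finset.Icc 3 N) \ P, (1 + 1/((n:ℝ)*((n:ℝ)-2))) := by
        calc (1:ℝ) = ∏ n ∈ (Finset.Icc 3 N) \ P, (1:ℝ) := by simp
          _ ≤ _ := Finset.prod_le_prod (by simp) (fun n hn => hfac n (Finset.mem_sdiff.mp hn).1)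
      nlinarith
    have hNpos : (0:ℝ) < (N:ℝ) := by exact_mod_cast Nat.lt_of_lt_of_le (by norm_num) hN2
    have htel : ∏ n ∈ Finset.Icc 3 N, (1 + 1/((n:ℝ)*((n:ℝ)-2))) = 2*((N:ℝ)-1)/(N:ℝ) :=
      telesc N hN2
    have h2b : ∏ n ∈ Finset.Icc 3 N, (1 + 1/((n:ℝ)*((n:ℝ)-2))) ≤ 2 := by
      rw [htel]
      rw [div_le_iff₀ hNpos]
      linarith
    calc (N:ℝ)/2 * ∏ p ∈ P, (1/((p:ℝ)*((p:ℝ)-2)) + 1)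
        ≤ (N:ℝ)/2 * 2 := by
          apply mul_le_mul_of_nonneg_left (le_trans hPprod h2b) (by positivity)
      _ = (N:ℝ) := by ring
  calc (∑ T ∈ P.powerset, ∑ h ∈ (Finset.Icc 2 N).filter (fun h => Even h),
          if (∏ p ∈ T, p) ∣ h then (∏ p ∈ T, 1/((p:ℝ)-2)) else 0)
      ≤ ∑ T ∈ P.powerset, ((N:ℝ)/2 * ∏ p ∈ T, 1/((p:ℝ)*((p:ℝ)-2))) :=
        Finset.sum_le_sum hB
    _ ≤ (N:ℝ) := hE
    _ ≤ r := hNr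
    _ < 1.2583 * r := by nlinarith
end

section
/- Let m be a squarefree integer with m ≥ 2, let n ≥ 1, and for each even index j with 0 ≤ j < n let R_j ⊆ {0,1,...,m-1} be a set of residues such that for any r, r' ∈ R_j, r - r' is never a square modulo m. Let S be the set of integers of the form 1 + Σ_{j=0}^{n-1} r_j m^j where r_j ∈ R_j for even j and r_j ∈ {0,...,m-1} arbitrary for odd j. Then for any two distinct s, s' ∈ S, the difference s - s' is not a perfect square. -/
lemma aux_sq_dvd {m : ℤ} (hm : Squarefree m) :
    ∀ k : ℕ, ∀ u : ℤ, m ^ k ∣ u ^ 2 → m ^ ((k + 1) / 2) ∣ u := by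
  intro k
  induction k using Nat.strong_induction_on with
  | _ k ih =>
    match k with
    | 0 => intro u _; simpa using one_dvd u
    | 1 =>
      intro u h
      have : m ∣ u ^ 2 := by simpa using h
      simpa using (hm.dvd_pow_iff_dvd (by norm_num)).mp this
    | (k + 2) =>
      intro u h
      have hmu : m ∣ u := by
        have h1 : m ∣ u ^ 2 := dvd_trans (dvd_pow_self m (by omega)) h
        exact (hm.dvd_pow_iff_dvd (by norm_num)).mp h1
      obtain ⟨v, rfl⟩ := hmu
      have hm0 : m ≠ 0 := hm.ne_zero
      have h2 : m ^ k ∣ v ^ 2 := by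
        have h3 : m ^ 2 * m ^ k ∣ m ^ 2 * v ^ 2 := by
          have e1 : m ^ 2 * m ^ k = m ^ (k + 2) := by ring
          have e2 : m ^ 2 * v ^ 2 = (m * v) ^ 2 := by ring
          rw [e1, e2]; exact h
        exact (mul_dvd_mul_iff_left (pow_ne_zero 2 hm0)).mp h3
      have h4 : m ^ ((k + 1) / 2) ∣ v := ih k (by omega) v h2
      have e : (k + 2 + 1) / 2 = (k + 1) / 2 + 1 := by omega
      rw [e, pow_succ]
      exact mul_dvd_mul h4 (dvd_refl m) |>.trans (by rw [mul_comm])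

theorem stmt6 (m n : ℕ) (hm : 2 ≤ m) (hsf : Squarefree m) (hn : 1 ≤ n)
    (R : ℕ → Finset ℕ)
    (hRm : ∀ j, j < n → Even j → R j ⊆ Finset.range m)
    (hRsq : ∀ j, j < n → Even j → ∀ r ∈ R j, ∀ r' ∈ R j, r ≠ r' →
      ∀ u : ℤ, ((u : ZMod m)) ^ 2 ≠ (r : ZMod m) - (r' : ZMod m))
    (S : Set ℕ)
    (hS : S = {s | ∃ f : ℕ → ℕ, (∀ j, j < n → f j < m) ∧
      (∀ j, j < n → Even j → f j ∈ R j) ∧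
      s = 1 + ∑ j ∈ Finset.range n, f j * m ^ j}) :
    ∀ s ∈ S, ∀ s' ∈ S, s ≠ s' → ¬∃ u : ℤ, (s : ℤ) - (s' : ℤ) = u ^ 2 := by
  subst hS
  rintro s ⟨f, hf, hfR, rfl⟩ s' ⟨g, hg, hgR, rfl⟩ hne ⟨u, hu⟩
  haveI : NeZero m := ⟨by omega⟩
  have hsfZ : Squarefree (m : ℤ) := Int.squarefree_natCast.mpr hsf
  have hex : ∃ j, j < n ∧ f j ≠ g j := by
    by_contra h
    push_neg at h
    exact hne (by
      congr 1
      exact Finset.sum_congr rfl fun j hj => by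
        rw [h j (Finset.mem_range.mp hj)])
  classical
  set k := Nat.find hex with hk
  obtain ⟨hkn, hkfg⟩ := Nat.find_spec hex
  have hmin : ∀ j, j < k → f j = g j := by
    intro j hj
    by_contra hc
    exact Nat.find_min hex hj ⟨by omega, hc⟩
  set T : ℤ := ∑ j ∈ Finset.Ico k n, ((f j : ℤ) - g j) * (m : ℤ) ^ (j - k) with hT
  have hsub : u ^ 2 = (m : ℤ) ^ k * T := by
    rw [← hu]
    push_cast
    have e1 : ((1 : ℤ) + ∑ j ∈ Finset.range n, (f j : ℤ) * (m : ℤ) ^ j)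
        - (1 + ∑ j ∈ Finset.range n, (g j : ℤ) * (m : ℤ) ^ j)
        = ∑ j ∈ Finset.range n, ((f j : ℤ) - g j) * (m : ℤ) ^ j := by
      rw [add_sub_add_left_eq_sub, ← Finset.sum_sub_distrib]
      exact Finset.sum_congr rfl fun j _ => by ring
    rw [e1, Finset.range_eq_Ico, ← Finset.sum_Ico_consecutive _ (Nat.zero_le k) (le_of_lt hkn)]
    have e2 : ∑ j ∈ Finset.Ico 0 k, ((f j : ℤ) - g j) * (m : ℤ) ^ j = 0 := by
      apply Finset.sum_eq_zero
      intro j hj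
      rw [hmin j (Finset.mem_Ico.mp hj).2]
      ring
    rw [e2, zero_add, hT, Finset.mul_sum]
    exact Finset.sum_congr rfl fun j hj => by
      obtain ⟨h1, h2⟩ := Finset.mem_Ico.mp hj
      rw [← mul_assoc, mul_comm ((m:ℤ)^k), mul_assoc, ← pow_add]
      congr 2
      omega
  have hTmod : (T : ZMod m) = (f k : ZMod m) - (g k : ZMod m) := by
    have : ((T : ℤ) : ZMod m) = ∑ j ∈ Finset.Ico k n,
        (((f j : ℤ) - g j : ℤ) : ZMod m) * ((m : ℤ) : ZMod m) ^ (j - k) := by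
      rw [hT]; push_cast; ring_nf
      exact Finset.sum_congr rfl fun j _ => by ring
    rw [this, Finset.sum_eq_single_of_mem k (Finset.mem_Ico.mpr ⟨le_refl k, hkn⟩)]
    · simp
    · intro j hj hjk
      obtain ⟨h1, h2⟩ := Finset.mem_Ico.mp hj
      have : ((m : ℤ) : ZMod m) = 0 := by push_cast; simp
      rw [this, zero_pow (by omega)]
      ring
  rcases Nat.even_or_odd k with hke | hko
  · -- k even, k = a + a
    obtain ⟨a, ha⟩ := hke
    have hdvd : (m : ℤ) ^ a ∣ u := by
      have : (m : ℤ) ^ k ∣ u ^ 2 := ⟨T, hsub⟩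
      have h5 := aux_sq_dvd hsfZ k u this
      have : (k + 1) / 2 = a := by omega
      rwa [this] at h5
    obtain ⟨v, rfl⟩ := hdvd
    have hm0 : (m : ℤ) ^ k ≠ 0 := pow_ne_zero k (by positivity)
    have hvT : v ^ 2 = T := by
      have e : ((m:ℤ)^a * v) ^ 2 = (m : ℤ) ^ k * v ^ 2 := by rw [ha]; ring
      rw [e] at hsub
      exact mul_left_cancel₀ hm0 hsub
    apply hRsq k hkn ⟨a, ha⟩ (f k) (hfR k hkn ⟨a, ha⟩) (g k) (hgR k hkn ⟨a, ha⟩) hkfg v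
    rw [← hTmod, ← hvT]
    push_cast
    ring
  · -- k odd, k = 2a+1
    obtain ⟨a, ha⟩ := hko
    have hdvd : (m : ℤ) ^ (a + 1) ∣ u := by
      have : (m : ℤ) ^ k ∣ u ^ 2 := ⟨T, hsub⟩
      have h5 := aux_sq_dvd hsfZ k u this
      have : (k + 1) / 2 = a + 1 := by omega
      rwa [this] at h5
    have hdvd2 : (m : ℤ) ^ k * (m : ℤ) ∣ u ^ 2 := by
      have : (m:ℤ) ^ k * m = ((m:ℤ) ^ (a+1)) ^ 2 := by rw [ha]; ring
      rw [this]
      exact pow_dvd_pow_of_dvd hdvd 2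
    rw [hsub] at hdvd2
    have hm0 : (m : ℤ) ^ k ≠ 0 := pow_ne_zero k (by positivity)
    have hmT : (m : ℤ) ∣ T := by
      obtain ⟨c, hc⟩ := hdvd2
      exact ⟨c, mul_left_cancel₀ hm0 (by rw [hc]; ring)⟩
    have hT0 : (T : ZMod m) = 0 := by
      obtain ⟨c, hc⟩ := hmT
      rw [hc]; push_cast; simp
    rw [hT0] at hTmod
    have : (f k : ZMod m) = (g k : ZMod m) := by
      have := hTmod.symm
      rwa [sub_eq_zero] at this
    apply hkfg
    have h1 : ((f k : ZMod m)).val = f k := ZMod.val_cast_of_lt (hf k hkn)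
    have h2 : ((g k : ZMod m)).val = g k := ZMod.val_cast_of_lt (hg k hkn)
    rw [← h1, ← h2, this]
end

section
/- For every x ≥ 2, there exists a set P of primes contained in {1, 2, ..., ⌊x⌋} with |P| ≥ (1/205)·x^γ/log x, where γ = 1/2 + log 12/(2 log 205), such that the difference of any two elements of P is never a perfect square. -/
set_option maxRecDepth 10000
set_option maxHeartbeats 1000000

namespace Stmt19Aux

def S0 : Finset (ZMod 205) := {0,22,24,56,79,82,93,116,135,150,158,192}

lemma S0_card : S0.card = 12 := by decide

def dig (p i : ℕ) : ℕ := (p / 205^(2*i)) % 205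


def pc (N : ℕ) : ℕ := ((Finset.range (N+1)).filter Nat.Prime).card

lemma centralBinom_le_pow (m : ℕ) (hm : 0 < m) :
    Nat.centralBinom m ≤ (2*m) ^ (pc (2*m)) := by
  have hC0 : Nat.centralBinom m ≠ 0 := (Nat.centralBinom_pos m).ne'
  have h2m : 0 < 2*m := by omega
  calc Nat.centralBinom m
      = (Nat.centralBinom m).factorization.prod (· ^ ·) :=
        (Nat.factorization_prod_pow_eq_self hC0).symm
    _ ≤ ∏ p ∈ (Nat.centralBinom m).factorization.support, (2*m) := by
        refine Finset.prod_le_prod' ?_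
        intro p hp
        exact Nat.pow_factorization_choose_le h2m
    _ = (2*m) ^ (Nat.centralBinom m).factorization.support.card := by
        rw [Finset.prod_const]
    _ ≤ (2*m) ^ (pc (2*m)) := by
        apply Nat.pow_le_pow_right (by omega)
        apply Finset.card_le_card
        intro p hp
        rw [Nat.support_factorization] at hp
        have hpp := Nat.prime_of_mem_primeFactors hp
        have h1 : 1 ≤ (Nat.centralBinom m).factorization p := by
          rw [← Nat.Prime.pow_dvd_iff_le_factorization hpp hC0, pow_one]
          exact Nat.dvd_of_mem_primeFactors hp
        have hle : p ≤ 2*m := by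
          calc p = p ^ 1 := (pow_one p).symm
          _ ≤ p ^ (Nat.centralBinom m).factorization p :=
              Nat.pow_le_pow_right hpp.pos h1
          _ ≤ 2*m := Nat.pow_factorization_choose_le h2m
        simp only [pc, Finset.mem_filter, Finset.mem_range]
        exact ⟨by omega, hpp⟩

lemma log_le_div_e {y : ℝ} (hy : 0 < y) : Real.log y * 2.718 ≤ y := by
  have he : (2.7182818283 : ℝ) < Real.exp 1 := Real.exp_one_gt_d9
  have h1 : Real.log (y / Real.exp 1) ≤ y / Real.exp 1 - 1 :=
    Real.log_le_sub_one_of_pos (by positivity)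
  rw [Real.log_div hy.ne' (Real.exp_ne_zero 1), Real.log_exp] at h1
  have h2 : Real.log y ≤ y / Real.exp 1 := by linarith
  have h3 : y / Real.exp 1 ≤ y / 2.718 := by
    apply div_le_div_of_nonneg_left hy.le (by norm_num)
    linarith
  have h4 : Real.log y ≤ y / 2.718 := h2.trans h3
  calc Real.log y * 2.718 ≤ (y / 2.718) * 2.718 := by nlinarith
  _ = y := by ring

lemma pc_mono : Monotone pc := fun a b hab => by
  apply Finset.card_le_card
  apply Finset.filter_subset_filter
  exact Finset.range_subset_range.mpr (by omega)

lemma cheb (N : ℕ) (hN : 2 ≤ N) : (N:ℝ) / (4 * Real.log N) ≤ pc N := by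
  have hlog2 : (0.6931471803 : ℝ) < Real.log 2 := Real.log_two_gt_d9
  have hNpos : (0:ℝ) < N := by positivity
  have hlogN : Real.log 2 ≤ Real.log N := Real.log_le_log (by norm_num) (by exact_mod_cast hN)
  have hlogNpos : (0:ℝ) < Real.log N := by linarith
  rcases Nat.lt_or_ge N 4 with h4 | h4
  · -- N = 2 or 3
    have hpc : 1 ≤ pc N := by
      have : pc 2 ≤ pc N := pc_mono hN
      have h2 : pc 2 = 1 := by decide
      omega
    have hpcR : (1:ℝ) ≤ pc N := by exact_mod_cast hpc
    rcases Nat.lt_or_ge N 3 with h3 | h3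
    · have hN2 : N = 2 := by omega
      subst hN2
      rw [div_le_iff₀ (by positivity)]
      have : (pc 2 : ℝ) = 1 := by norm_num [show pc 2 = 1 from by decide]
      rw [this]
      push_cast
      nlinarith
    · have hN3 : N = 3 := by omega
      subst hN3
      have : (pc 3 : ℝ) = 2 := by norm_num [show pc 3 = 2 from by decide]
      rw [this, div_le_iff₀ (by positivity)]
      have : Real.log 2 ≤ Real.log 3 := Real.log_le_log (by norm_num) (by norm_num)
      push_cast
      nlinarith
  · -- N ≥ 4
    set m := N / 2 with hm
    have hm2 : 2 ≤ m := by omega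
    have h2m : 2*m ≤ N ∧ N ≤ 2*m + 1 := by omega
    have hmpos : (0:ℝ) < m := by positivity
    set k := pc (2*m) with hk
    have hkN : k ≤ pc N := pc_mono h2m.1
    -- 4^m ≤ (2m)^(k+1)
    have key : (4:ℕ) ^ m ≤ (2*m) ^ (k+1) := by
      calc (4:ℕ)^m ≤ 2*m*Nat.centralBinom m :=
            Nat.four_pow_le_two_mul_self_mul_centralBinom m (by omega)
        _ ≤ 2*m * (2*m)^k := Nat.mul_le_mul_left _ (centralBinom_le_pow m (by omega))
        _ = (2*m)^(k+1) := by ring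
    -- to reals and logs
    have keyR : (m:ℝ) * Real.log 4 ≤ (k+1) * Real.log (2*m) := by
      have h1 : ((4:ℕ)^m : ℝ) ≤ ((2*m)^(k+1) : ℕ) := by exact_mod_cast key
      have h2 : Real.log ((4:ℝ)^m) ≤ Real.log (((2*m:ℕ))^(k+1) : ℝ) := by
        apply Real.log_le_log (by positivity)
        push_cast at h1 ⊢
        exact_mod_cast h1
      rw [Real.log_pow, Real.log_pow] at h2
      push_cast at h2 ⊢
      convert h2 using 2 <;> push_cast <;> ring_nf
    have hlog4 : Real.log 4 = 2 * Real.log 2 := by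
      rw [show (4:ℝ) = 2^2 by norm_num, Real.log_pow]; push_cast; ring
    set L := Real.log (2*(m:ℝ)) with hL
    have hmR : (2:ℝ) ≤ (m:ℝ) := by exact_mod_cast hm2
    have hLpos : (0:ℝ) < L := by
      apply Real.log_pos; push_cast; nlinarith
    have hLe : L * 2.718 ≤ 2*m := by
      have := log_le_div_e (y := 2*(m:ℝ)) (by positivity)
      convert this using 2 <;> push_cast <;> ring
    have keyR2 : (m:ℝ) * (2*Real.log 2) ≤ ((k:ℝ)+1) * L := by
      rw [hlog4] at keyR
      exact keyR
    -- want: N/(4 log N) ≤ pc N. Since N ≤ 2m+1, log N ≥ L: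
    have hLN : L ≤ Real.log N := by
      apply Real.log_le_log (by positivity)
      push_cast; exact_mod_cast (by push_cast; exact_mod_cast h2m.1 : (2*m:ℝ) ≤ N)
    -- suffices (2m+1) ≤ 4k L
    have h8 : (0.6931471803:ℝ) * m ≤ Real.log 2 * (m:ℝ) := by nlinarith
    have hmain : (2*(m:ℝ)+1) ≤ 4 * k * L := by nlinarith [keyR2, hLe, h8, hmR, hLpos]
    have hkR : ((k:ℝ)) ≤ pc N := by exact_mod_cast hkN
    rw [div_le_iff₀ (by positivity)]
    have hNle : (N:ℝ) ≤ 2*m+1 := by exact_mod_cast h2m.2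
    calc (N:ℝ) ≤ 2*m+1 := hNle
      _ ≤ 4*k*L := hmain
      _ ≤ (pc N) * (4 * Real.log N) := by
          have hk0 : (0:ℝ) ≤ (k:ℝ) := by positivity
          nlinarith [mul_le_mul hkR hLN hLpos.le (by positivity : (0:ℝ) ≤ (pc N : ℝ))]


lemma S0_key : ∀ s ∈ S0, ∀ s' ∈ S0, s ≠ s' → ∀ w : ZMod 205, w * w ≠ s - s' := by decide

/-- Core lemma: if X, Y < 205^(2n) both satisfy the digit condition and Y < X,
then X - Y is not a perfect square. -/
lemma diff_not_square (n : ℕ) (t : Fin n → ZMod 205) (X Y : ℕ)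
    (hX : X < 205^(2*n)) (hYX : Y < X)
    (hXc : ∀ i : Fin n, ((dig X i : ZMod 205) - t i) ∈ S0)
    (hYc : ∀ i : Fin n, ((dig Y i : ZMod 205) - t i) ∈ S0)
    (w : ℕ) : X - Y ≠ w^2 := by
  intro hsq
  set m := X - Y with hmdef
  have hm0 : m ≠ 0 := by omega
  have hw0 : w ≠ 0 := by rintro rfl; simp at hsq; omega
  have h5 : Nat.Prime 5 := by norm_num
  have h41 : Nat.Prime 41 := by norm_num
  set a := m.factorization 5 with ha
  set b := m.factorization 41 with hb
  have haw : a = 2 * w.factorization 5 := by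
    rw [ha, hsq, Nat.factorization_pow]; simp
  have hbw : b = 2 * w.factorization 41 := by
    rw [hb, hsq, Nat.factorization_pow]; simp
  set j := min a b with hj
  have hjeven : j = 2 * min (w.factorization 5) (w.factorization 41) := by
    omega
  set i := min (w.factorization 5) (w.factorization 41) with hi
  -- 205^j ∣ m
  have h5dvd : 5^j ∣ m := by
    refine (Nat.Prime.pow_dvd_iff_le_factorization h5 hm0).mpr ?_
    omega
  have h41dvd : 41^j ∣ m := by
    refine (Nat.Prime.pow_dvd_iff_le_factorization h41 hm0).mpr ?_
    omega
  have hcop : Nat.Coprime (5^j) (41^j) := Nat.Coprime.pow _ _ (by norm_num)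
  have h205dvd : 205^j ∣ m := by
    have : (5^j) * (41^j) ∣ m := hcop.mul_dvd_of_dvd_of_dvd h5dvd h41dvd
    simpa [← mul_pow] using this
  set D := m / 205^j with hD
  have hmD : m = 205^j * D := (Nat.mul_div_cancel' h205dvd).symm
  have hD0 : D ≠ 0 := by
    intro h; rw [h, mul_zero] at hmD; exact hm0 hmD
  have hD205 : ¬ (205 ∣ D) := by
    intro ⟨c, hc⟩
    have h5' : 5^(j+1) ∣ m := by
      rw [hmD, hc]
      have : (5:ℕ)^(j+1) ∣ 205^(j+1) := pow_dvd_pow_of_dvd (by norm_num) _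
      calc (5:ℕ)^(j+1) ∣ 205^(j+1) := this
        _ ∣ 205^j * (205 * c) := by rw [pow_succ]; exact mul_dvd_mul_left _ (dvd_mul_right 205 c)
    have h41' : 41^(j+1) ∣ m := by
      rw [hmD, hc]
      have : (41:ℕ)^(j+1) ∣ 205^(j+1) := pow_dvd_pow_of_dvd (by norm_num) _
      calc (41:ℕ)^(j+1) ∣ 205^(j+1) := this
        _ ∣ 205^j * (205 * c) := by rw [pow_succ]; exact mul_dvd_mul_left _ (dvd_mul_right 205 c)
    have ha' : j+1 ≤ a := (Nat.Prime.pow_dvd_iff_le_factorization h5 hm0).mp h5'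
    have hb' : j+1 ≤ b := (Nat.Prime.pow_dvd_iff_le_factorization h41 hm0).mp h41'
    omega
  -- j < 2n since 205^j ≤ m < 205^(2n)
  have hjlt : j < 2*n := by
    have h1 : 205^j ≤ m := by
      calc 205^j ≤ 205^j * D := Nat.le_mul_of_pos_right _ (Nat.pos_of_ne_zero hD0)
        _ = m := hmD.symm
    have h2 : m < 205^(2*n) := by omega
    have := lt_of_le_of_lt h1 h2
    exact (Nat.pow_lt_pow_iff_right (by norm_num)).mp this
  have hiltn : i < n := by omega
  -- w = 205^i * w0, D = w0^2
  have h5w : 5^i ∣ w := by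
    refine (Nat.Prime.pow_dvd_iff_le_factorization h5 hw0).mpr ?_
    omega
  have h41w : 41^i ∣ w := by
    refine (Nat.Prime.pow_dvd_iff_le_factorization h41 hw0).mpr ?_
    omega
  have h205w : 205^i ∣ w := by
    have hcop' : Nat.Coprime (5^i) (41^i) := Nat.Coprime.pow _ _ (by norm_num)
    have : (5^i) * (41^i) ∣ w := hcop'.mul_dvd_of_dvd_of_dvd h5w h41w
    simpa [← mul_pow] using this
  obtain ⟨w0, hw0eq⟩ := h205w
  have hDw0 : D = w0^2 := by
    have : 205^j * D = 205^j * w0^2 := by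
      rw [← hmD, hsq, hw0eq, mul_pow, ← pow_mul]
      rw [hjeven]; ring_nf
    exact Nat.eq_of_mul_eq_mul_left (by positivity) this
  -- digit relation: X = Y + 205^(2i) * D
  have hXY : X = Y + 205^(2*i) * D := by
    have : 205^(2*i) = 205^j := by rw [hjeven]
    rw [this, ← hmD]; omega
  have hdigX : (dig X i : ZMod 205) = (Y / 205^(2*i) : ℕ) + (D : ZMod 205) := by
    unfold dig
    rw [hXY, Nat.add_mul_div_left _ _ (by positivity)]
    rw [ZMod.natCast_mod]
    push_cast
    ring
  have hdigY : (dig Y i : ZMod 205) = ((Y / 205^(2*i) : ℕ) : ZMod 205) := by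
    unfold dig; rw [ZMod.natCast_mod]
  -- apply S0_key
  have hXi : ((dig X i : ℕ) : ZMod 205) - t ⟨i, hiltn⟩ ∈ S0 := hXc ⟨i, hiltn⟩
  have hYi : ((dig Y i : ℕ) : ZMod 205) - t ⟨i, hiltn⟩ ∈ S0 := hYc ⟨i, hiltn⟩
  set τ := t ⟨i, hiltn⟩ with hτ
  have hDne : (D : ZMod 205) ≠ 0 := by
    rw [Ne, ZMod.natCast_eq_zero_iff]
    exact hD205
  have hkey : ((dig X i : ℕ) : ZMod 205) - (dig Y i : ZMod 205) = (D : ZMod 205) := by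
    rw [hdigX, hdigY]; ring
  have hne : ((dig X i : ℕ) : ZMod 205) - τ ≠ ((dig Y i : ℕ) : ZMod 205) - τ := by
    intro h
    apply hDne
    rw [← hkey]
    linear_combination h
  have h1 : ((D : ℕ) : ZMod 205) = (w0 : ZMod 205) * w0 := by
    rw [hDw0]; push_cast; ring
  have hfin : (w0 : ZMod 205) * w0 = (((dig X i : ℕ) : ZMod 205) - τ) - (((dig Y i : ℕ) : ZMod 205) - τ) := by
    linear_combination -hkey - h1
  exact S0_key _ hXi _ hYi hne w0 hfin


open Finset in
def PP (N n : ℕ) (t : Fin n → ZMod 205) : Finset ℕ :=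
  (Finset.range (N+1)).filter
    (fun p => p.Prime ∧ ∀ i : Fin n, ((dig p i : ZMod 205) - t i) ∈ S0)


open Finset in
lemma count_t {n : ℕ} (d : Fin n → ZMod 205) :
    (Finset.univ.filter (fun t : Fin n → ZMod 205 => ∀ i, d i - t i ∈ S0)).card = 12^n := by
  classical
  have heq : Finset.univ.filter (fun t : Fin n → ZMod 205 => ∀ i, d i - t i ∈ S0)
      = Fintype.piFinset (fun i => S0.image (fun s => d i - s)) := by
    ext t
    simp only [Finset.mem_filter, Finset.mem_univ, true_and, Fintype.mem_piFinset,
      Finset.mem_image]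
    constructor
    · intro h i
      exact ⟨d i - t i, h i, by ring⟩
    · rintro h i
      obtain ⟨s, hs, hst⟩ := h i
      have : d i - t i = s := by rw [← hst]; ring
      rw [this]; exact hs
  rw [heq, Fintype.card_piFinset]
  have : ∀ i : Fin n, (S0.image (fun s => d i - s)).card = 12 := by
    intro i
    rw [Finset.card_image_of_injective _ (sub_right_injective), S0_card]
  simp only [this]
  simp [Finset.prod_const]

open Finset in
lemma sum_card (N n : ℕ) :
    ∑ t : Fin n → ZMod 205, (PP N n t).card = 12^n * pc N := by
  classical
  simp only [PP, Finset.card_filter]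
  rw [Finset.sum_comm]
  have hinner : ∀ p ∈ Finset.range (N+1),
      (∑ t : Fin n → ZMod 205, if p.Prime ∧ ∀ i : Fin n, ((dig p i : ZMod 205) - t i) ∈ S0 then 1 else 0)
      = if p.Prime then 12^n else 0 := by
    intro p _
    by_cases hp : p.Prime
    · simp only [hp, true_and, if_true]
      rw [← count_t (fun i => (dig p i : ZMod 205))]
      rw [Finset.card_filter]
    · simp [hp]
  rw [Finset.sum_congr rfl hinner]
  rw [Finset.sum_ite, Finset.sum_const, Finset.sum_const]
  simp [pc, mul_comm]

open Finset in
lemma exists_good (N n : ℕ) :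
    ∃ t : Fin n → ZMod 205, 12^n * pc N ≤ 205^n * (PP N n t).card := by
  classical
  by_contra hcon
  push_neg at hcon
  have hcard : Fintype.card (Fin n → ZMod 205) = 205^n := by
    rw [Fintype.card_fun]; simp [ZMod.card]
  have hlt : ∑ t : Fin n → ZMod 205, (205^n * (PP N n t).card) <
      ∑ _t : Fin n → ZMod 205, 12^n * pc N := by
    apply Finset.sum_lt_sum_of_nonempty
    · exact Finset.univ_nonempty
    · intro t _
      exact hcon t
  rw [← Finset.mul_sum, sum_card, Finset.sum_const, Finset.card_univ, hcard, smul_eq_mul] at hlt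
  omega

lemma final_real (x : ℝ) (hx : 2 ≤ x)
    (N : ℕ) (hNfl : N = ⌊x⌋₊) (hN2 : 2 ≤ N)
    (n K : ℕ) (hK : K = Nat.log 205 N + 1)
    (hn : n = (K+1)/2)
    (hK1 : 205^(K-1) ≤ N)
    (PCN : ℕ)
    (cheb : (N:ℝ) / (4 * Real.log N) ≤ (PCN : ℕ))
    (card : ℕ)
    (ht : 12^n * PCN ≤ 205^n * card) :
    (1 / 205 : ℝ) * x ^ (1 / 2 + Real.log 12 / (2 * Real.log 205)) / Real.log x
        ≤ card := by
  have hx0 : (0:ℝ) < x := by linarith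
  have hNx : (N:ℝ) ≤ x := by rw [hNfl]; exact Nat.floor_le hx0.le
  have hxN1 : x < N + 1 := by rw [hNfl]; exact Nat.lt_floor_add_one x
  have hNR : (2:ℝ) ≤ (N:ℝ) := by exact_mod_cast hN2
  set γ : ℝ := 1 / 2 + Real.log 12 / (2 * Real.log 205) with hγdef
  have hl205 : (0:ℝ) < Real.log 205 := Real.log_pos (by norm_num)
  have hl12 : (0:ℝ) < Real.log 12 := Real.log_pos (by norm_num)
  have hl12le : Real.log 12 ≤ Real.log 205 := Real.log_le_log (by norm_num) (by norm_num)
  have hγ0 : 0 ≤ γ := by rw [hγdef]; positivity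
  have hγ1 : γ ≤ 1 := by
    rw [hγdef]
    have : Real.log 12 / (2 * Real.log 205) ≤ 1/2 := by
      rw [div_le_iff₀ (by positivity)]; linarith
    linarith
  have h1γ0 : 0 ≤ 1 - γ := by linarith
  have hlogN : (0:ℝ) < Real.log N := Real.log_pos (by linarith)
  have hlogx : (0:ℝ) < Real.log x := Real.log_pos (by linarith)
  have hlogNx : Real.log N ≤ Real.log x := Real.log_le_log (by linarith) hNx
  -- the 205^β = 12 identity
  have h205β : (205:ℝ) ^ (Real.log 12 / Real.log 205) = 12 := by
    rw [Real.rpow_def_of_pos (by norm_num : (0:ℝ) < 205)]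
    rw [mul_comm, div_mul_cancel₀ _ hl205.ne']
    exact Real.exp_log (by norm_num)
  set ρ : ℝ := (205:ℝ) ^ (1 - γ) with hρdef
  have hρ0 : 0 < ρ := Real.rpow_pos_of_pos (by norm_num) _
  have hρ2 : ρ * ρ = 205/12 := by
    rw [hρdef, ← Real.rpow_add (by norm_num : (0:ℝ) < 205)]
    have : (1 - γ) + (1 - γ) = 1 - Real.log 12 / Real.log 205 := by
      rw [hγdef]; field_simp; ring
    rw [this, Real.rpow_sub (by norm_num : (0:ℝ) < 205), Real.rpow_one, h205β]
  set B : ℝ := ((205:ℝ)/12)^n with hBdef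
  have hB0 : (0:ℝ) < B := by positivity
  have hBinv : B⁻¹ = ((12:ℝ)/205)^n := by
    rw [hBdef, ← inv_pow, inv_div]
  -- N^(1-γ) ≥ (205/12)^(n-1)
  have h2nK : 2*n ≤ K + 1 := by omega
  have hn1 : 1 ≤ n := by omega
  have hNpow : ((205:ℝ))^((2*n-2 : ℕ)) ≤ (N:ℝ) := by
    have h1 : (205:ℕ)^(2*n-2) ≤ 205^(K-1) := Nat.pow_le_pow_right (by norm_num) (by omega)
    have := le_trans h1 hK1
    exact_mod_cast this
  have hNγ : ((205:ℝ)/12)^(n-1) ≤ (N:ℝ)^(1-γ) := by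
    have hmono : (((205:ℝ))^((2*n-2:ℕ)))^(1-γ) ≤ (N:ℝ)^(1-γ) :=
      Real.rpow_le_rpow (by positivity) hNpow h1γ0
    have hswap : (((205:ℝ))^((2*n-2:ℕ)))^(1-γ) = ρ^((2*n-2 : ℕ)) := by
      rw [← Real.rpow_natCast (205:ℝ) (2*n-2), ← Real.rpow_mul (by norm_num),
        mul_comm, Real.rpow_mul (by norm_num), Real.rpow_natCast]
    have hfold : ρ^((2*n-2:ℕ)) = ((205:ℝ)/12)^(n-1) := by
      rw [show 2*n-2 = 2*(n-1) by omega, pow_mul, sq, hρ2]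
    rw [hswap, hfold] at hmono
    exact hmono
  -- key: 8 * B ≤ 205 * N^(1-γ)
  have key : 8 * B ≤ 205 * (N:ℝ)^(1-γ) := by
    have hBsucc : B = (205/12) * ((205:ℝ)/12)^(n-1) := by
      rw [hBdef]
      have : ((205:ℝ)/12)^n = (205/12)^(n-1) * (205/12) := by
        rw [← pow_succ]; congr 1; omega
      rw [this]; ring
    have h8 : 8 * B ≤ 205 * ((205:ℝ)/12)^(n-1) := by
      rw [hBsucc]
      have hp0 : (0:ℝ) ≤ ((205:ℝ)/12)^(n-1) := by positivity
      nlinarith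
    calc 8 * B ≤ 205 * ((205:ℝ)/12)^(n-1) := h8
      _ ≤ 205 * (N:ℝ)^(1-γ) := by nlinarith [hNγ]
  -- x^γ ≤ 2 N^γ
  have hNγpos : (0:ℝ) < (N:ℝ)^γ := Real.rpow_pos_of_pos (by linarith) _
  have hxγ : x ^ γ ≤ 2 * (N:ℝ)^γ := by
    have hx2N : x ≤ 2*(N:ℝ) := by linarith
    calc x ^ γ ≤ (2*(N:ℝ))^γ := Real.rpow_le_rpow hx0.le hx2N hγ0
      _ = 2^γ * (N:ℝ)^γ := Real.mul_rpow (by norm_num) (by positivity)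
      _ ≤ 2 * (N:ℝ)^γ := by
          have h2γ : (2:ℝ)^γ ≤ 2^(1:ℝ) := Real.rpow_le_rpow_of_exponent_le (by norm_num) hγ1
          rw [Real.rpow_one] at h2γ
          exact mul_le_mul_of_nonneg_right h2γ hNγpos.le
  -- split N
  have hsplit : (N:ℝ) = (N:ℝ)^γ * (N:ℝ)^(1-γ) := by
    rw [← Real.rpow_add (by linarith : (0:ℝ) < (N:ℝ))]
    norm_num
  -- middle: (2/205) N^γ * B ≤ N/4
  have h2 : (2/205) * (N:ℝ)^γ * B ≤ (N:ℝ)/4 := by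
    have hmul := mul_le_mul_of_nonneg_left key hNγpos.le
    nlinarith [hmul, hsplit]
  have h2' : (2/205) * (N:ℝ)^γ ≤ B⁻¹ * ((N:ℝ)/4) := by
    rw [inv_mul_eq_div, le_div_iff₀ hB0]
    linarith
  -- chain
  have hstep1 : (1/205 : ℝ) * x ^ γ / Real.log x ≤ (2/205) * (N:ℝ)^γ / Real.log N := by
    apply div_le_div₀ (by positivity) (by nlinarith) hlogN hlogNx
  have hstep2 : (2/205) * (N:ℝ)^γ / Real.log N ≤ B⁻¹ * ((N:ℝ)/(4 * Real.log N)) := by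
    have heq : B⁻¹ * ((N:ℝ)/(4 * Real.log N)) = (B⁻¹ * ((N:ℝ)/4)) / Real.log N := by
      field_simp
    rw [heq]
    exact (div_le_div_iff_of_pos_right hlogN).mpr h2'
  have hstep3 : B⁻¹ * ((N:ℝ)/(4 * Real.log N)) ≤ B⁻¹ * (PCN:ℝ) :=
    mul_le_mul_of_nonneg_left cheb (by positivity)
  have hstep4 : B⁻¹ * (PCN:ℝ) ≤ (card:ℝ) := by
    have htR : (12:ℝ)^n * (PCN:ℝ) ≤ (205:ℝ)^n * (card:ℝ) := by exact_mod_cast ht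
    rw [hBinv, div_pow, div_mul_eq_mul_div, div_le_iff₀ (by positivity : (0:ℝ) < (205:ℝ)^n)]
    linarith
  calc (1/205 : ℝ) * x ^ γ / Real.log x ≤ (2/205) * (N:ℝ)^γ / Real.log N := hstep1
    _ ≤ B⁻¹ * ((N:ℝ)/(4 * Real.log N)) := hstep2
    _ ≤ B⁻¹ * (PCN:ℝ) := hstep3
    _ ≤ (card:ℝ) := hstep4

end Stmt19Aux


open Stmt19Aux in
theorem stmt19 (x : ℝ) (hx : 2 ≤ x) :
    ∃ P : Finset ℕ, (∀ p ∈ P, p.Prime) ∧ (∀ p ∈ P, 1 ≤ p ∧ p ≤ ⌊x⌋₊) ∧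
      (1 / 205 : ℝ) * x ^ (1 / 2 + Real.log 12 / (2 * Real.log 205)) / Real.log x
        ≤ P.card ∧
      ∀ p ∈ P, ∀ q ∈ P, p ≠ q → ¬∃ u : ℤ, (p : ℤ) - (q : ℤ) = u ^ 2 := by
  classical
  set N := ⌊x⌋₊ with hNfl
  have hN2 : 2 ≤ N := Nat.le_floor (by exact_mod_cast hx)
  set K := Nat.log 205 N + 1 with hK
  set n := (K+1)/2 with hn
  have hK1 : 205^(K-1) ≤ N := by
    simpa [hK] using Nat.pow_log_le_self 205 (by omega : N ≠ 0)
  have hK2 : N < 205^K := Nat.lt_pow_succ_log_self (by norm_num) N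
  have hK2n : K ≤ 2*n := by omega
  have hN2n : N < 205^(2*n) :=
    lt_of_lt_of_le hK2 (Nat.pow_le_pow_right (by norm_num) hK2n)
  obtain ⟨t, ht⟩ := exists_good N n
  refine ⟨PP N n t, ?_, ?_, ?_, ?_⟩
  · intro p hp
    simp only [PP, Finset.mem_filter] at hp
    exact hp.2.1
  · intro p hp
    simp only [PP, Finset.mem_filter, Finset.mem_range] at hp
    exact ⟨hp.2.1.one_lt.le.trans' (by norm_num), by omega⟩
  · exact final_real x hx N hNfl hN2 n K hK hn hK1 (pc N) (cheb N hN2) _ ht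
  · intro p hp q hq hpq ⟨u, hu⟩
    simp only [PP, Finset.mem_filter, Finset.mem_range] at hp hq
    rcases lt_trichotomy p q with hlt | heq | hgt
    · have h1 : (p:ℤ) < (q:ℤ) := by exact_mod_cast hlt
      nlinarith [sq_nonneg u, hu]
    · exact hpq heq
    · have h1 : ((p - q : ℕ) : ℤ) = u^2 := by
        rw [Nat.cast_sub hgt.le]; exact hu
      have h2 : p - q = u.natAbs^2 := by
        have := congrArg Int.natAbs h1
        simpa [Int.natAbs_pow] using this
      exact diff_not_square n t p q (by omega) hgt hp.2.2 hq.2.2 u.natAbs h2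
end
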